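/- Let D be a connected rooted digraph, let (u,v) be a cut-edge of D, and let D' be the rooted digraph obtained from D by contracting (u,v). Then maxleaf(D) ≥ maxleaf(D'). -/

import Mathlib

/-!
An outbranching `T'` of the contracted digraph lifts to an outbranching of `D` with at least as
many leaves: keep the edge `(u,v)` and give every other non-root vertex `b ≠ v` a `D`-edge that
witnesses the `T'`-edge into the class of `b`. The only delicate vertex is `u`, whose class might
receive its `T'`-edge only through an edge `(x,v)`. Since `(u,v)` is a cut-edge, `x` is not
reachable from `r` in `D - (u,v)`, so the `T'`-path from the root to the class of `x` runs through
the contracted vertex, and the `T'`-edge from `x` back into it would close a cycle in `T'`.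
Leaves of `T'` lift to leaves, the contracted vertex to `v`.
-/

namespace OutBranching

variable {V : Type}

/-! ### Basic digraph notions -/

/-- `b` is reachable from `a` by a directed path. -/
def Reaches (E : V → V → Prop) (a b : V) : Prop := Relation.ReflTransGen E a b

/-- The rooted digraph `(E, r)` is connected: every vertex is reachable from the root. -/
def Connected (E : V → V → Prop) (r : V) : Prop := ∀ v, Reaches E r v

/-- `b` is reachable from `a` by a directed path avoiding the vertex set `S`. -/
def ReachAvoid (E : V → V → Prop) (S : Set V) (a b : V) : Prop :=
  a ∉ S ∧ b ∉ S ∧ Relation.ReflTransGen (fun x y => E x y ∧ x ∉ S ∧ y ∉ S) a b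

/-- A cut-vertex: a vertex `v ≠ r` whose removal makes some (other) vertex unreachable
from the root `r`. -/
def IsCutVertex (E : V → V → Prop) (r v : V) : Prop :=
  v ≠ r ∧ ∃ u, u ≠ v ∧ ¬ ReachAvoid E {v} r u

/-- The set of cut-vertices. -/
def cutVertices (E : V → V → Prop) (r : V) : Set V := {v | IsCutVertex E r v}

/-- The edge relation obtained by deleting the single edge `(u,v)`. -/
def delEdge (E : V → V → Prop) (u v : V) : V → V → Prop :=
  fun a b => E a b ∧ ¬ (a = u ∧ b = v)

/-- A cut-edge: an edge `(u,v)` whose deletion makes some vertex unreachable from `r`. -/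
def IsCutEdge (E : V → V → Prop) (r u v : V) : Prop :=
  E u v ∧ ∃ w, ¬ Reaches (delEdge E u v) r w

/-- A lonely cut-edge: no other cut-edge has the same tail. -/
def IsLonelyCutEdge (E : V → V → Prop) (r u v : V) : Prop :=
  IsCutEdge E r u v ∧ ∀ w, IsCutEdge E r u w → w = v

/-- A branching cut-edge: some other cut-edge has the same tail. -/
def IsBranchingCutEdge (E : V → V → Prop) (r u v : V) : Prop :=
  IsCutEdge E r u v ∧ ∃ w, w ≠ v ∧ IsCutEdge E r u w

/-- In-neighbourhood. -/
def inN (E : V → V → Prop) (v : V) : Set V := {u | E u v}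

/-- Out-neighbourhood. -/
def outN (E : V → V → Prop) (v : V) : Set V := {w | E v w}

/-- Private neighbors of `u`: out-neighbors of `u` not reachable from `r` in `D - u`. -/
def privateNbrs (E : V → V → Prop) (r u : V) : Set V :=
  {v | E u v ∧ ¬ ReachAvoid E {u} r v}

/-- A special vertex: in-degree at least 3, or an incoming simple edge. -/
def Special (E : V → V → Prop) (v : V) : Prop :=
  3 ≤ (inN E v).ncard ∨ ∃ u, E u v ∧ ¬ E v u

/-- The set of special vertices. -/
def sp (E : V → V → Prop) : Set V := {v | Special E v}

/-! ### Outbranchings and `maxleaf` -/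

/-- `T` is an outbranching of `(E, r)`: a spanning subdigraph in which every vertex is
reachable from `r`, every vertex other than `r` has in-degree exactly 1,
and `r` has in-degree 0. -/
structure IsOutbranching (E : V → V → Prop) (r : V) (T : V → V → Prop) : Prop where
  sub : ∀ ⦃a b⦄, T a b → E a b
  reach : ∀ v, Reaches T r v
  indeg : ∀ v, v ≠ r → ∃! u, T u v
  rootIndeg : ∀ u, ¬ T u r

/-- The number of leaves (vertices of out-degree 0) of `T`. -/
noncomputable def leafCount (T : V → V → Prop) : ℕ := {v | ∀ w, ¬ T v w}.ncard

/-- The maximum number of leaves over all outbranchings of `(E, r)`. -/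
noncomputable def maxleaf (E : V → V → Prop) (r : V) : ℕ :=
  sSup {n | ∃ T, IsOutbranching E r T ∧ leafCount T = n}

/-! ### The reduction rules (each `RuleᵢNA` says that rule i does NOT apply) -/

/-- Rule 1 does not apply: every vertex is reachable from the root. -/
def Rule1NA (E : V → V → Prop) (r : V) : Prop := Connected E r

/-- Rule 2 does not apply: no cut-vertex has exactly one incoming edge,
and no cut-vertex has exactly one outgoing edge. -/
def Rule2NA (E : V → V → Prop) (r : V) : Prop :=
  ∀ v, IsCutVertex E r v → ¬ (∃! u, E u v) ∧ ¬ (∃! w, E v w)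

/-- Rule 3 does not apply: there is no proper bipath of length 4, i.e. no sequence
of 5 distinct vertices `a b c d e` whose three internal vertices have their in- and
out-neighbourhoods equal to the pair of adjacent vertices on the sequence. -/
def Rule3NA (E : V → V → Prop) : Prop :=
  ¬ ∃ a b c d e : V, List.Pairwise (· ≠ ·) [a, b, c, d, e] ∧
    (∀ w, (E w b ↔ w = a ∨ w = c) ∧ (E b w ↔ w = a ∨ w = c)) ∧
    (∀ w, (E w c ↔ w = b ∨ w = d) ∧ (E c w ↔ w = b ∨ w = d)) ∧
    (∀ w, (E w d ↔ w = c ∨ w = e) ∧ (E d w ↔ w = c ∨ w = e))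

/-- Rule 4 does not apply: there is no vertex `x` with an in-neighbor `y` such that
removing all in-neighbors of `x` other than `y` disconnects `y` from `r`. -/
def Rule4NA (E : V → V → Prop) (r : V) : Prop :=
  ¬ ∃ x y, E y x ∧ ¬ ReachAvoid E {v | E v x ∧ v ≠ y} r y

/-- Rule 5 does not apply: there are no two cut-edges `(x₁,y₁)`, `(x₂,y₂)` with both
`(x₁,x₂)` and `(x₂,x₁)` being edges. -/
def Rule5NA (E : V → V → Prop) (r : V) : Prop :=
  ¬ ∃ x₁ y₁ x₂ y₂, IsCutEdge E r x₁ y₁ ∧ IsCutEdge E r x₂ y₂ ∧ E x₁ x₂ ∧ E x₂ x₁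

/-- Rule 6 does not apply: there is no cut-edge `(u,v)` with `(v,u)` an edge. -/
def Rule6NA (E : V → V → Prop) (r : V) : Prop :=
  ¬ ∃ u v, IsCutEdge E r u v ∧ E v u

/-- Reduction rules R1–R4 do not apply. -/
def Reduced4 (E : V → V → Prop) (r : V) : Prop :=
  Rule1NA E r ∧ Rule2NA E r ∧ Rule3NA E ∧ Rule4NA E r

/-- Reduction rules R1–R6 do not apply. -/
def Reduced6 (E : V → V → Prop) (r : V) : Prop :=
  Reduced4 E r ∧ Rule5NA E r ∧ Rule6NA E r

/-! ### Contraction -/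

/-- The setoid on `V` generated by identifying the endpoints of the edges in `C`. -/
def contractSetoid (C : V → V → Prop) : Setoid V := Relation.EqvGen.setoid C

/-- Vertices of the digraph obtained by contracting all edges in `C`. -/
def CVert (C : V → V → Prop) : Type := Quotient (contractSetoid C)

/-- The projection of a vertex to the contracted digraph. -/
def cmk (C : V → V → Prop) (x : V) : CVert C := Quotient.mk (contractSetoid C) x

/-- The edge relation of the digraph obtained from `E` by contracting all edges in `C`
(loops and parallel edges are discarded). -/
def contractE (E : V → V → Prop) (C : V → V → Prop) : CVert C → CVert C → Prop :=
  fun a b => a ≠ b ∧ ∃ x y, cmk C x = a ∧ cmk C y = b ∧ E x y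

/-- The relation consisting of a single edge `(u,v)` (used for contracting one edge). -/
def singleEdge (u v : V) : V → V → Prop := fun a b => a = u ∧ b = v

/-- The relation of lonely cut-edges. -/
def lonelyRel (E : V → V → Prop) (r : V) : V → V → Prop :=
  fun u v => IsLonelyCutEdge E r u v

/-- Vertices of the contracted graph `D_c`, obtained by contracting all lonely cut-edges. -/
def ContractedVert (E : V → V → Prop) (r : V) : Type := CVert (lonelyRel E r)

/-- The edge relation of the contracted graph `D_c`. -/
def contractedE (E : V → V → Prop) (r : V) : ContractedVert E r → ContractedVert E r → Prop :=
  contractE E (lonelyRel E r)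

/-- The root of the contracted graph `D_c`. -/
def contractedRoot (E : V → V → Prop) (r : V) : ContractedVert E r := cmk (lonelyRel E r) r

/-- The bag of a vertex of `D_c`: the set of original vertices contracted into it. -/
def bag (E : V → V → Prop) (r : V) (a : ContractedVert E r) : Set V :=
  {x | cmk (lonelyRel E r) x = a}

/-- `t` is a tail of the bag `B`: it is the tail of a contracted (lonely) cut-edge inside `B`,
or `B` is the singleton `{t}`. -/
def IsTailOf (E : V → V → Prop) (r : V) (B : Set V) (t : V) : Prop :=
  t ∈ B ∧ (B = {t} ∨ ∃ h ∈ B, IsLonelyCutEdge E r t h)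

/-- `h` is a head of the bag `B`: it is the head of a contracted (lonely) cut-edge inside `B`,
or `B` is the singleton `{h}`. -/
def IsHeadOf (E : V → V → Prop) (r : V) (B : Set V) (h : V) : Prop :=
  h ∈ B ∧ (B = {h} ∨ ∃ t ∈ B, IsLonelyCutEdge E r t h)

/-- Two bags are linked if there is an edge of `D` in each direction between them. -/
def LinkedBags (E : V → V → Prop) (A B : Set V) : Prop :=
  (∃ x ∈ A, ∃ y ∈ B, E x y) ∧ (∃ x ∈ B, ∃ y ∈ A, E x y)

/-! ### Duplication of a vertex -/

/-- Duplicating the vertex `v`: the new vertex is `none`, receiving/sending edges exactly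
as `v` does. -/
def dupE (E : V → V → Prop) (v : V) : Option V → Option V → Prop
  | some a, some b => E a b
  | some a, none => E a v
  | none, some b => E v b
  | none, none => False

/-! ### Undirected notions: underlying graph, minors -/

/-- The underlying undirected simple graph of a digraph. -/
def underlying (E : V → V → Prop) : SimpleGraph V where
  Adj a b := a ≠ b ∧ (E a b ∨ E b a)
  symm := ⟨fun a b h => ⟨Ne.symm h.1, h.2.symm⟩⟩
  loopless := ⟨fun a h => h.1 rfl⟩

/-- `H` is a minor of `G`: there is a minor model of `H` in `G`. -/
def IsMinorOf {W U : Type} (H : SimpleGraph W) (G : SimpleGraph U) : Prop :=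
  ∃ I : W → Set U,
    (∀ u, (G.induce (I u)).Connected) ∧
    (Pairwise fun u v => Disjoint (I u) (I v)) ∧
    (∀ u v, H.Adj u v → ∃ x ∈ I u, ∃ y ∈ I v, G.Adj x y)

/-- `G` is `H`-minor-free. -/
def MinorFree {W U : Type} (H : SimpleGraph W) (G : SimpleGraph U) : Prop := ¬ IsMinorOf H G

/-! ### Weak bipaths -/

/-- A weak bipath in a digraph: a sequence of at least 3 distinct vertices whose internal
vertices have in-neighbourhood exactly the two adjacent vertices of the sequence, both
of which are also out-neighbours. -/
structure WeakBipath {W : Type} (E : W → W → Prop) where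
  len : ℕ
  u : Fin (len + 3) → W
  inj : Function.Injective u
  cond : ∀ i j k : Fin (len + 3), j.val + 1 = i.val → i.val + 1 = k.val →
    (∀ w, E w (u i) ↔ (w = u j ∨ w = u k)) ∧ E (u i) (u j) ∧ E (u i) (u k)

/-- The set of internal vertices of a weak bipath. -/
def WeakBipath.internal {W : Type} {E : W → W → Prop} (P : WeakBipath E) : Set W :=
  {w | ∃ i : Fin (P.len + 3), 0 < i.val ∧ i.val < P.len + 2 ∧ P.u i = w}

/-- The first extremity of a weak bipath. -/
def WeakBipath.first {W : Type} {E : W → W → Prop} (P : WeakBipath E) : W := P.u 0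

/-- The last extremity of a weak bipath. -/
def WeakBipath.last {W : Type} {E : W → W → Prop} (P : WeakBipath E) : W :=
  P.u (Fin.last (P.len + 2))


theorem _root_.Relation.ReflTransGen.avoiding_or_from {α : Type*} {R : α → α → Prop} {a b : α}
    (m : α) (h : Relation.ReflTransGen R a b) :
    Relation.ReflTransGen (fun x y => R x y ∧ y ≠ m) a b ∨ Relation.ReflTransGen R m b := by
  induction h with
  | refl => exact Or.inl .refl
  | @tail b c _ hbc ih =>
    by_cases hc : c = m
    · exact Or.inr (hc ▸ .refl)
    · exact ih.imp (·.tail ⟨hbc, hc⟩) (·.tail hbc)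

theorem reaches_delEdge_of_reaches {E : V → V → Prop} {a w u v : V}
    (hbypass : Reaches (delEdge E u v) a u → Reaches (delEdge E u v) a v)
    (h : Reaches E a w) : Reaches (delEdge E u v) a w := by
  induction h with
  | refl => exact .refl
  | @tail b c _ hbc ih =>
    by_cases hbc' : b = u ∧ c = v
    · obtain ⟨rfl, rfl⟩ := hbc'
      exact hbypass ih
    · exact ih.tail ⟨hbc, hbc'⟩

namespace IsCutEdge

variable {E : V → V → Prop} {r u v : V}

theorem not_reaches_delEdge (hconn : Connected E r) (hcut : IsCutEdge E r u v) :
    ¬ Reaches (delEdge E u v) r v := fun hv =>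
  let ⟨w, hw⟩ := hcut.2
  hw (reaches_delEdge_of_reaches (fun _ => hv) (hconn w))

theorem ne (hconn : Connected E r) (hcut : IsCutEdge E r u v) : u ≠ v := by
  rintro rfl
  obtain ⟨w, hw⟩ := hcut.2
  exact hw (reaches_delEdge_of_reaches id (hconn w))

theorem head_ne_root (hconn : Connected E r) (hcut : IsCutEdge E r u v) : v ≠ r := by
  rintro rfl
  exact hcut.not_reaches_delEdge hconn .refl

end IsCutEdge

section SingleEdge

variable {u v : V}

theorem cmk_surjective (C : V → V → Prop) : Function.Surjective (cmk C) :=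
  Quotient.mk_surjective

theorem cmk_singleEdge_eq_iff {x y : V} :
    cmk (singleEdge u v) x = cmk (singleEdge u v) y ↔
      x = y ∨ ((x = u ∨ x = v) ∧ (y = u ∨ y = v)) := by
  constructor
  · intro h
    replace h : Relation.EqvGen (singleEdge u v) x y := Quotient.exact h
    induction h with
    | rel a b hab => exact Or.inr ⟨Or.inl hab.1, Or.inr hab.2⟩
    | refl => exact Or.inl rfl
    | symm => tauto
    | trans a b c _ _ ih₁ ih₂ =>
      rcases ih₁ with rfl | ⟨ha, hb⟩
      · exact ih₂
      · rcases ih₂ with rfl | ⟨-, hc⟩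
        exacts [Or.inr ⟨ha, hb⟩, Or.inr ⟨ha, hc⟩]
  · have huv : Relation.EqvGen (singleEdge u v) u v := .rel _ _ ⟨rfl, rfl⟩
    rintro (rfl | ⟨rfl | rfl, rfl | rfl⟩) <;> apply Quotient.sound
    exacts [.refl _, .refl _, huv, .symm _ _ huv, .refl _]

theorem cmk_singleEdge_head : cmk (singleEdge u v) v = cmk (singleEdge u v) u :=
  cmk_singleEdge_eq_iff.2 (Or.inr ⟨Or.inr rfl, Or.inl rfl⟩)

theorem eq_of_cmk_singleEdge_eq {x y : V} (h : cmk (singleEdge u v) x = cmk (singleEdge u v) y)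
    (hx : cmk (singleEdge u v) x ≠ cmk (singleEdge u v) u) : x = y := by
  rcases cmk_singleEdge_eq_iff.1 h with h | ⟨rfl | rfl, -⟩
  exacts [h, absurd rfl hx, absurd cmk_singleEdge_head hx]

theorem reaches_delEdge_of_reflTransGen_avoiding {E : V → V → Prop} {a : V}
    {B : CVert (singleEdge u v)}
    (ha : cmk (singleEdge u v) a ≠ cmk (singleEdge u v) u)
    (h : Relation.ReflTransGen (fun A B => contractE E (singleEdge u v) A B ∧
      B ≠ cmk (singleEdge u v) u) (cmk (singleEdge u v) a) B)
    {b : V} (hb : cmk (singleEdge u v) b = B) : Reaches (delEdge E u v) a b := by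
  induction h generalizing b with
  | refl => exact eq_of_cmk_singleEdge_eq hb.symm ha ▸ .refl
  | tail _ hBC ih =>
    obtain ⟨⟨-, x, y, hx, hy, hxy⟩, hC⟩ := hBC
    obtain rfl : y = b := eq_of_cmk_singleEdge_eq (hy.trans hb.symm) (hy ▸ hC)
    have hyv : y ≠ v := fun h => hC (hy ▸ h ▸ cmk_singleEdge_head)
    exact (ih hx).tail ⟨hxy, fun h => hyv h.2⟩

end SingleEdge

namespace IsOutbranching

variable {E T : V → V → Prop} {r : V}

theorem eq_of_rel (hT : IsOutbranching E r T) {a b c : V} (ha : T a c) (hb : T b c) : a = b :=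
  have hc : c ≠ r := fun h => hT.rootIndeg a (h ▸ ha)
  (hT.indeg c hc).unique ha hb

theorem not_reaches_of_rel (hT : IsOutbranching E r T) {a b : V} (hab : T a b) :
    ¬ Reaches T b a := by
  intro hba
  -- Following the root path, no vertex lies on the cycle through `b`: each vertex of the cycle
  -- has its unique parent on the cycle.
  suffices h : ∀ x, Reaches T r x → ¬ (Reaches T b x ∧ Reaches T x b) from
    h a (hT.reach a) ⟨hba, .single hab⟩
  intro x hx
  induction hx with
  | refl =>
    rintro ⟨hbr, -⟩
    rcases Relation.ReflTransGen.cases_tail hbr with rfl | ⟨c, -, hc⟩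
    exacts [hT.rootIndeg a hab, hT.rootIndeg c hc]
  | @tail x y _ hxy ih =>
    rintro ⟨hby, hyb⟩
    rcases Relation.ReflTransGen.cases_tail hby with rfl | ⟨z, hbz, hzy⟩
    · exact ih (hT.eq_of_rel hab hxy ▸ ⟨hba, .single hab⟩)
    · exact ih ⟨hT.eq_of_rel hzy hxy ▸ hbz, .head hxy hyb⟩

theorem reaches_avoiding_of_rel (hT : IsOutbranching E r T) {a b : V} (hab : T a b) :
    Relation.ReflTransGen (fun x y => T x y ∧ y ≠ b) r a :=
  ((hT.reach a).avoiding_or_from b).resolve_right (hT.not_reaches_of_rel hab)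

end IsOutbranching

theorem leafCount_le_of_leaves_subset_image {W : Type} [Finite V] {T : V → V → Prop}
    {S : W → W → Prop} (f : V → W) (h : {A | ∀ B, ¬ S A B} ⊆ f '' {a | ∀ b, ¬ T a b}) :
    leafCount S ≤ leafCount T :=
  (Set.ncard_le_ncard h ((Set.toFinite _).image f)).trans (Set.ncard_image_le (Set.toFinite _))

theorem le_maxleaf [Finite V] {E T : V → V → Prop} {r : V} (hT : IsOutbranching E r T) :
    leafCount T ≤ maxleaf E r :=
  le_csSup ⟨Nat.card V, by rintro _ ⟨S, -, rfl⟩; exact Set.ncard_le_card _⟩ ⟨T, hT, rfl⟩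

theorem maxleaf_le_maxleaf [Finite V] {W : Type} {E : V → V → Prop} {r : V} {E' : W → W → Prop}
    {r' : W} (h : ∀ T', IsOutbranching E' r' T' →
      ∃ T, IsOutbranching E r T ∧ leafCount T' ≤ leafCount T) :
    maxleaf E' r' ≤ maxleaf E r :=
  csSup_le' <| by
    rintro _ ⟨T', hT', rfl⟩
    obtain ⟨T, hT, hle⟩ := h T' hT'
    exact hle.trans (le_maxleaf hT)

def IsParentLift (E : V → V → Prop) (r u v : V)
    (T' : CVert (singleEdge u v) → CVert (singleEdge u v) → Prop) (p : V → V) : Prop :=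
  ∀ b, b ≠ r → b ≠ v → E (p b) b ∧ T' (cmk (singleEdge u v) (p b)) (cmk (singleEdge u v) b)

namespace IsCutEdge

variable {E : V → V → Prop} {r u v : V}
  {T' : CVert (singleEdge u v) → CVert (singleEdge u v) → Prop}

theorem not_rel_cmk_of_adj_head (hconn : Connected E r) (hcut : IsCutEdge E r u v)
    (hT' : IsOutbranching (contractE E (singleEdge u v)) (cmk (singleEdge u v) r) T') {x : V}
    (hxv : E x v) (hx : T' (cmk (singleEdge u v) x) (cmk (singleEdge u v) u)) : False := by
  have hxu : cmk (singleEdge u v) x ≠ cmk (singleEdge u v) u := (hT'.sub hx).1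
  have hru : cmk (singleEdge u v) r ≠ cmk (singleEdge u v) u := fun h =>
    hT'.rootIndeg _ (h ▸ hx)
  have hrx : Reaches (delEdge E u v) r x :=
    reaches_delEdge_of_reflTransGen_avoiding hru
      (Relation.ReflTransGen.mono (fun _ _ h => ⟨hT'.sub h.1, h.2⟩) _ _
        (hT'.reaches_avoiding_of_rel hx)) rfl
  exact hcut.not_reaches_delEdge hconn (hrx.tail ⟨hxv, fun h => hxu (h.1 ▸ rfl)⟩)

theorem exists_parent (hconn : Connected E r) (hcut : IsCutEdge E r u v)
    (hT' : IsOutbranching (contractE E (singleEdge u v)) (cmk (singleEdge u v) r) T') {b : V}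
    (hbr : b ≠ r) (hbv : b ≠ v) :
    ∃ a, E a b ∧ T' (cmk (singleEdge u v) a) (cmk (singleEdge u v) b) := by
  have hvr := hcut.head_ne_root hconn
  have hb : cmk (singleEdge u v) b ≠ cmk (singleEdge u v) r := by
    rw [Ne, cmk_singleEdge_eq_iff]
    grind
  obtain ⟨A, hA, -⟩ := hT'.indeg _ hb
  obtain ⟨-, x, y, rfl, hy, hxy⟩ := hT'.sub hA
  rcases cmk_singleEdge_eq_iff.1 hy with rfl | ⟨rfl | rfl, rfl | rfl⟩
  · exact ⟨x, hxy, hA⟩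
  · exact ⟨x, hxy, hA⟩
  · exact absurd rfl hbv
  · exact (hcut.not_rel_cmk_of_adj_head hconn hT' hxy hA).elim
  · exact absurd rfl hbv

theorem exists_isParentLift (hconn : Connected E r) (hcut : IsCutEdge E r u v)
    (hT' : IsOutbranching (contractE E (singleEdge u v)) (cmk (singleEdge u v) r) T') :
    ∃ p, IsParentLift E r u v T' p := by
  have : Nonempty V := ⟨r⟩
  choose! p hp using fun b (hbr : b ≠ r) (hbv : b ≠ v) => hcut.exists_parent hconn hT' hbr hbv
  exact ⟨p, hp⟩

end IsCutEdge

def liftBranching (r u v : V) (p : V → V) : V → V → Prop :=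
  fun a b => (a = u ∧ b = v) ∨ (b ≠ r ∧ b ≠ v ∧ a = p b)

section LiftBranching

variable {E : V → V → Prop} {r u v : V} {p : V → V}
  {T' : CVert (singleEdge u v) → CVert (singleEdge u v) → Prop}

theorem liftBranching_indeg {b : V} (hbr : b ≠ r) : ∃! a, liftBranching r u v p a b := by
  by_cases hbv : b = v
  · refine ⟨u, Or.inl ⟨rfl, hbv⟩, ?_⟩
    rintro a (⟨rfl, -⟩ | ⟨-, hbv', -⟩)
    exacts [rfl, absurd hbv hbv']
  · refine ⟨p b, Or.inr ⟨hbr, hbv, rfl⟩, ?_⟩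
    rintro a (⟨-, hbv'⟩ | ⟨-, -, rfl⟩)
    exacts [absurd hbv' hbv, rfl]

theorem IsParentLift.rel_cmk_of_liftBranching (hp : IsParentLift E r u v T' p) {a b : V}
    (h : liftBranching r u v p a b) (ha : a ≠ u) :
    T' (cmk (singleEdge u v) a) (cmk (singleEdge u v) b) := by
  rcases h with ⟨rfl, -⟩ | ⟨hbr, hbv, rfl⟩
  exacts [absurd rfl ha, (hp b hbr hbv).2]

theorem IsParentLift.reaches_liftBranching (hp : IsParentLift E r u v T' p)
    (hT' : IsOutbranching (contractE E (singleEdge u v)) (cmk (singleEdge u v) r) T')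
    (huv : u ≠ v) (hvr : v ≠ r) (b : V) : Reaches (liftBranching r u v p) r b := by
  suffices h : ∀ B, Relation.ReflTransGen T' (cmk (singleEdge u v) r) B →
      ∀ b, cmk (singleEdge u v) b = B → Reaches (liftBranching r u v p) r b from
    h _ (hT'.reach _) b rfl
  intro B hB
  induction hB with
  | refl =>
    intro b hb
    rcases cmk_singleEdge_eq_iff.1 hb with rfl | ⟨rfl | rfl, rfl | rfl⟩
    · exact .refl
    · exact .refl
    · exact absurd rfl hvr
    · exact .single (Or.inl ⟨rfl, rfl⟩)
    · exact absurd rfl hvr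
  | @tail A B _ hAB ih =>
    have hparent : ∀ c, c ≠ v → cmk (singleEdge u v) c = B →
        Reaches (liftBranching r u v p) r c := fun c hcv hc => by
      by_cases hcr : c = r
      · exact hcr ▸ .refl
      exact Relation.ReflTransGen.tail (ih _ (hT'.eq_of_rel (hp c hcr hcv).2 (hc ▸ hAB)))
        (Or.inr ⟨hcr, hcv, rfl⟩)
    intro b hb
    by_cases hbv : b = v
    · subst hbv
      exact Relation.ReflTransGen.tail (hparent u huv (cmk_singleEdge_head ▸ hb))
        (Or.inl ⟨rfl, rfl⟩)
    · exact hparent b hbv hb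

theorem IsParentLift.isOutbranching_liftBranching (hp : IsParentLift E r u v T' p)
    (hT' : IsOutbranching (contractE E (singleEdge u v)) (cmk (singleEdge u v) r) T')
    (hEuv : E u v) (huv : u ≠ v) (hvr : v ≠ r) :
    IsOutbranching E r (liftBranching r u v p) where
  sub := by
    rintro a b (⟨rfl, rfl⟩ | ⟨hbr, hbv, rfl⟩)
    exacts [hEuv, (hp b hbr hbv).1]
  reach := hp.reaches_liftBranching hT' huv hvr
  indeg _ := liftBranching_indeg
  rootIndeg := by
    rintro a (⟨-, h⟩ | ⟨h, -⟩)
    exacts [hvr h.symm, h rfl]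

theorem IsParentLift.leafCount_le_leafCount_liftBranching [Finite V]
    (hp : IsParentLift E r u v T' p) (huv : u ≠ v) :
    leafCount T' ≤ leafCount (liftBranching r u v p) := by
  refine leafCount_le_of_leaves_subset_image (cmk (singleEdge u v)) fun A hA => ?_
  obtain ⟨b, hbu, rfl⟩ : ∃ b, b ≠ u ∧ cmk (singleEdge u v) b = A := by
    obtain ⟨b, rfl⟩ := cmk_surjective _ A
    by_cases hbu : b = u
    · exact ⟨v, huv.symm, hbu ▸ cmk_singleEdge_head⟩
    · exact ⟨b, hbu, rfl⟩
  exact ⟨b, fun c hc => hA _ (hp.rel_cmk_of_liftBranching hc hbu), rfl⟩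

end LiftBranching

theorem contract_cut_edge_maxleaf_general {V : Type} [Fintype V] (E : V → V → Prop) (r u v : V)
    (hconn : Connected E r) (hcut : IsCutEdge E r u v) :
    maxleaf (contractE E (singleEdge u v)) (cmk (singleEdge u v) r) ≤ maxleaf E r := by
  refine maxleaf_le_maxleaf fun T' hT' => ?_
  obtain ⟨p, hp⟩ := hcut.exists_isParentLift hconn hT'
  exact ⟨liftBranching r u v p,
    hp.isOutbranching_liftBranching hT' hcut.1 (hcut.ne hconn) (hcut.head_ne_root hconn),
    hp.leafCount_le_leafCount_liftBranching (hcut.ne hconn)⟩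

/-- Contracting a cut-edge `(u,v)` of a connected rooted digraph does not
increase the maximum number of leaves: `maxleaf(D) ≥ maxleaf(D')`. -/
theorem contract_cut_edge_maxleaf {V : Type} [Fintype V] (E : V → V → Prop) (r u v : V)
    (hroot : ∀ w, ¬ E w r) (hconn : Connected E r) (hcut : IsCutEdge E r u v) :
    maxleaf (contractE E (singleEdge u v)) (cmk (singleEdge u v) r) ≤ maxleaf E r :=
  contract_cut_edge_maxleaf_general E r u v hconn hcut

end OutBranching
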